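/- (Budget balance) Let m* be any generalized Nash equilibrium of the game induced by the misinformation-filtering mechanism, and suppose that at m* the minimum in the definition of η_i is not binding, i.e., (n_i·h̃_i* / Σ_{k∈I} n_k·h̃_k*)·α₀(m*) ≤ 1 for every i ∈ I. Then the taxes sum to zero: Σ_{i∈J} τ_i(m*) = 0. -/

import Mathlib

open Finset

noncomputable section

namespace MisinfoFilter

/-- A message of a social-media platform: the proposed minimum average trust `ht`,
the proposed prices `pP l` for the filters of the other competing platforms,
the proposed price `pG` for the government's lower bound, the proposed filters `a k`
for the competing platforms and the proposed lower bound `aG` for the government. -/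
structure PlatformMsg (N : ℕ) where
  ht : ℝ
  pP : Fin N → ℝ
  pG : ℝ
  a : Fin N → ℝ
  aG : ℝ

/-- The government's message: a proposed price `pG` and a proposed lower bound `aG`. -/
structure GovMsg where
  pG : ℝ
  aG : ℝ

/-- A message profile: one message per platform and one for the government. -/
structure Profile (N : ℕ) where
  pf : Fin N → PlatformMsg N
  gov : GovMsg

/-- Validity of a platform message: nonnegative proposed trust and prices. -/
def PlatformMsg.Valid {N : ℕ} (msg : PlatformMsg N) : Prop :=
  0 ≤ msg.ht ∧ (∀ l, 0 ≤ msg.pP l) ∧ 0 ≤ msg.pG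

/-- Validity of a government message: nonnegative proposed price. -/
def GovMsg.Valid (g : GovMsg) : Prop := 0 ≤ g.pG

/-- Unilateral deviation of platform `i` to message `msg`. -/
def Profile.updPf {N : ℕ} (m : Profile N) (i : Fin N) (msg : PlatformMsg N) : Profile N :=
  ⟨Function.update m.pf i msg, m.gov⟩

/-- Unilateral deviation of the government to message `g`. -/
def Profile.updGov {N : ℕ} (m : Profile N) (g : GovMsg) : Profile N :=
  ⟨m.pf, g⟩

/-- The data of the misinformation-filtering game: `N ≥ 1` platforms, competing sets
`C i ∋ i` with `|C i| ≥ 3` and symmetric competition, user fractions `n` (positive,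
summing to one), average trust functions `h i`, valuations `v i` (each depending only on
the coordinates in `C i`), the government's valuation `v0` and budget `b0 ≥ 0`. -/
structure Framework (N : ℕ) where
  hN : 1 ≤ N
  C : Fin N → Finset (Fin N)
  mem_C : ∀ i, i ∈ C i
  card_C : ∀ i, 3 ≤ (C i).card
  symm_C : ∀ i k, i ∈ C k ↔ k ∈ C i
  n : Fin N → ℝ
  n_pos : ∀ i, 0 < n i
  n_sum : ∑ i, n i = 1
  h : Fin N → ℝ → ℝ
  v : Fin N → (Fin N → ℝ) → ℝ
  v_localized : ∀ i p q, (∀ k ∈ C i, p k = q k) → v i p = v i q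
  v0 : ℝ → ℝ
  b0 : ℝ
  b0_nonneg : 0 ≤ b0

namespace Framework

variable {N : ℕ}

/-- Allocated filter `α_i(m)`: the average of proposals for `i` by the platforms in `C i`. -/
def alpha (F : Framework N) (m : Profile N) (i : Fin N) : ℝ :=
  (∑ k ∈ F.C i, (m.pf k).a i) / ((F.C i).card : ℝ)

/-- Allocated lower bound `α₀(m)`: the average of all proposed lower bounds. -/
def alpha0 (F : Framework N) (m : Profile N) : ℝ :=
  (m.gov.aG + ∑ k, (m.pf k).aG) / ((N : ℝ) + 1)

/-- `Σ_k n_k · h̃_k`. -/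
def trustSum (F : Framework N) (m : Profile N) : ℝ := ∑ k, F.n k * (m.pf k).ht

/-- Allocated minimum average trust `η_i(m)`. -/
def eta (F : Framework N) (m : Profile N) (i : Fin N) : ℝ :=
  min ((F.n i * (m.pf i).ht / F.trustSum m) * F.alpha0 m) 1

/-- Allocated price `π_target^payer` paid by `payer` per unit of the filter of `target`:
the average of the prices proposed for `target` by the platforms in `C target`
other than `target` and `payer`. -/
def price (F : Framework N) (m : Profile N) (payer target : Fin N) : ℝ :=
  (∑ k ∈ ((F.C target).erase target).erase payer, (m.pf k).pP target) /
    (((F.C target).card : ℝ) - 2)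

/-- Allocated government price `π₀`. -/
def price0 (F : Framework N) (m : Profile N) : ℝ := (∑ i, (m.pf i).pG) / (N : ℝ)

/-- Average proposal `ã_l^{-i}` for platform `l` by the platforms in `C l` other than `i`. -/
def aAvgMinus (F : Framework N) (m : Profile N) (i l : Fin N) : ℝ :=
  (∑ k ∈ (F.C l).erase i, (m.pf k).a l) / (((F.C l).card : ℝ) - 1)

/-- Average proposal `ã₀^{-i}` of lower bounds by all players except platform `i`. -/
def aGAvgMinus (F : Framework N) (m : Profile N) (i : Fin N) : ℝ :=
  (m.gov.aG + ∑ k, (m.pf k).aG - (m.pf i).aG) / (N : ℝ)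

/-- Tax `τ_i(m)` of platform `i`. -/
def tax (F : Framework N) (m : Profile N) (i : Fin N) : ℝ :=
  - m.gov.pG * F.eta m i
  - (∑ l ∈ (F.C i).erase i, F.price m l i) * F.alpha m i
  + ∑ l ∈ (F.C i).erase i, F.price m i l * F.alpha m l
  + (∑ l ∈ (F.C i).erase i, (m.pf i).pP l * ((m.pf i).a l - F.aAvgMinus m i l) ^ 2)
  + (m.pf i).pG * ((m.pf i).aG - F.aGAvgMinus m i) ^ 2

/-- Tax (investment) `τ₀(m)` of the government. -/
def tax0 (F : Framework N) (m : Profile N) : ℝ :=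
  F.price0 m * F.alpha0 m + (m.gov.pG - F.price0 m) ^ 2

/-- Utility of platform `i`. -/
def util (F : Framework N) (m : Profile N) (i : Fin N) : ℝ :=
  F.v i (F.alpha m) - F.tax m i

/-- Utility of the government. -/
def util0 (F : Framework N) (m : Profile N) : ℝ := F.v0 (F.alpha0 m) - F.tax0 m

/-- An admissible message profile: all messages valid and `Σ_k n_k h̃_k > 0`
(profiles with `Σ_k n_k h̃_k = 0` are excluded by the social planner). -/
def ProfileValid (F : Framework N) (m : Profile N) : Prop :=
  (∀ i, (m.pf i).Valid) ∧ m.gov.Valid ∧ 0 < F.trustSum m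

/-- Generalized Nash equilibrium of the induced game: the profile is admissible, every
player's own allocation is feasible, no platform can profit by a unilateral deviation whose
allocated filter stays in its feasible set `S_i`, and the government cannot profit by a
unilateral deviation satisfying its feasibility and budget constraints. -/
def IsGNE (F : Framework N) (m : Profile N) : Prop :=
  F.ProfileValid m ∧
  (∀ i, F.alpha m i ∈ Set.Icc (0:ℝ) 1 ∧ F.eta m i ≤ F.n i * F.h i (F.alpha m i)) ∧
  F.alpha0 m ∈ Set.Icc (0:ℝ) 1 ∧ F.price0 m * F.alpha0 m ≤ F.b0 ∧
  (∀ (i : Fin N) (msg : PlatformMsg N), msg.Valid →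
    0 < F.trustSum (m.updPf i msg) →
    F.alpha (m.updPf i msg) i ∈ Set.Icc (0:ℝ) 1 →
    F.eta (m.updPf i msg) i ≤ F.n i * F.h i (F.alpha (m.updPf i msg) i) →
    F.util (m.updPf i msg) i ≤ F.util m i) ∧
  (∀ g : GovMsg, g.Valid →
    F.alpha0 (m.updGov g) ∈ Set.Icc (0:ℝ) 1 →
    F.price0 (m.updGov g) * F.alpha0 (m.updGov g) ≤ F.b0 →
    F.util0 (m.updGov g) ≤ F.util0 m)

end Framework

/-- The standing regularity assumptions of the model: each `h i` maps `[0,1]` into `[0,1]`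
and is strictly increasing, concave and differentiable; each valuation `v i` is nonnegative,
concave and differentiable on the box, decreasing in the own coordinate and strictly
increasing in the coordinates of the other competing platforms; the government's valuation
`v0` is nonnegative, increasing, concave and differentiable on `[0,1]`. -/
structure Framework.Regular {N : ℕ} (F : Framework N) : Prop where
  h_maps : ∀ i, Set.MapsTo (F.h i) (Set.Icc 0 1) (Set.Icc 0 1)
  h_strictMono : ∀ i, StrictMonoOn (F.h i) (Set.Icc 0 1)
  h_concave : ∀ i, ConcaveOn ℝ (Set.Icc 0 1) (F.h i)
  h_diff : ∀ i, DifferentiableOn ℝ (F.h i) (Set.Icc 0 1)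
  v_nonneg : ∀ i p, (∀ k, p k ∈ Set.Icc (0:ℝ) 1) → 0 ≤ F.v i p
  v_concave : ∀ i, ConcaveOn ℝ {p : Fin N → ℝ | ∀ k, p k ∈ Set.Icc (0:ℝ) 1} (F.v i)
  v_diff : ∀ i, DifferentiableOn ℝ (F.v i) {p : Fin N → ℝ | ∀ k, p k ∈ Set.Icc (0:ℝ) 1}
  v_own_anti : ∀ i p, (∀ k, p k ∈ Set.Icc (0:ℝ) 1) →
    ∀ x y : ℝ, x ∈ Set.Icc (0:ℝ) 1 → y ∈ Set.Icc (0:ℝ) 1 → x ≤ y →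
      F.v i (Function.update p i y) ≤ F.v i (Function.update p i x)
  v_other_strictMono : ∀ i l, l ∈ F.C i → l ≠ i →
    ∀ p, (∀ k, p k ∈ Set.Icc (0:ℝ) 1) →
    ∀ x y : ℝ, x ∈ Set.Icc (0:ℝ) 1 → y ∈ Set.Icc (0:ℝ) 1 → x < y →
      F.v i (Function.update p l x) < F.v i (Function.update p l y)
  v0_nonneg : ∀ x ∈ Set.Icc (0:ℝ) 1, 0 ≤ F.v0 x
  v0_mono : MonotoneOn F.v0 (Set.Icc 0 1)
  v0_concave : ConcaveOn ℝ (Set.Icc 0 1) F.v0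
  v0_diff : DifferentiableOn ℝ F.v0 (Set.Icc 0 1)

end MisinfoFilter

end


/-!
At an equilibrium a platform may withdraw all its price proposals: this changes no allocation
and none of the prices it pays or receives (those are averages over the *other* platforms), so
it only removes its nonnegative quadratic penalties, which therefore vanish. Likewise the
government may propose `π₀` itself, so `p̃₀ = π₀` and its quadratic term vanishes. What is left
balances: when the minimum in `η_i` is not binding the `η_i` sum to `α₀`, so the subsidies
`p̃₀ η_i` add up to the government's investment `π₀ α₀`, and by symmetry of competition every
bilateral payment `π_l^i α_l` is received by `l` exactly once.
-/

noncomputable section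

namespace MisinfoFilter

variable {N : ℕ}

def PlatformMsg.withoutPrices (msg : PlatformMsg N) : PlatformMsg N :=
  { msg with pP := 0, pG := 0 }

lemma PlatformMsg.Valid.withoutPrices {msg : PlatformMsg N} (h : msg.Valid) :
    msg.withoutPrices.Valid :=
  ⟨h.1, fun _ => le_rfl, le_rfl⟩

lemma Profile.apply_updPf_pf {β : Type*} (m : Profile N) (i : Fin N) {msg : PlatformMsg N}
    (f : PlatformMsg N → β) (hf : f msg = f (m.pf i)) (k : Fin N) :
    f ((m.updPf i msg).pf k) = f (m.pf k) := by
  by_cases hk : k = i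
  · subst hk; simpa [Profile.updPf] using hf
  · simp [Profile.updPf, Function.update_of_ne hk]

namespace Framework

variable (F : Framework N) (m : Profile N)

def transfer (i : Fin N) : ℝ :=
  - m.gov.pG * F.eta m i
  - (∑ l ∈ (F.C i).erase i, F.price m l i) * F.alpha m i
  + ∑ l ∈ (F.C i).erase i, F.price m i l * F.alpha m l

def penalty (i : Fin N) : ℝ :=
  (∑ l ∈ (F.C i).erase i, (m.pf i).pP l * ((m.pf i).a l - F.aAvgMinus m i l) ^ 2)
  + (m.pf i).pG * ((m.pf i).aG - F.aGAvgMinus m i) ^ 2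

lemma tax_eq_transfer_add_penalty (i : Fin N) :
    F.tax m i = F.transfer m i + F.penalty m i := by
  unfold tax transfer penalty
  ring

lemma penalty_nonneg {i : Fin N} (hi : (m.pf i).Valid) : 0 ≤ F.penalty m i :=
  add_nonneg (sum_nonneg fun l _ => mul_nonneg (hi.2.1 l) (sq_nonneg _))
    (mul_nonneg hi.2.2 (sq_nonneg _))

lemma penalty_updPf_withoutPrices (i : Fin N) :
    F.penalty (m.updPf i (m.pf i).withoutPrices) i = 0 := by
  simp [penalty, Profile.updPf, PlatformMsg.withoutPrices]

lemma mem_erase_C_comm (i l : Fin N) : l ∈ (F.C i).erase i ↔ i ∈ (F.C l).erase l := by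
  simp only [mem_erase, ne_comm, F.symm_C i l]

section Deviation

variable {m} {i : Fin N} {msg : PlatformMsg N}

lemma alpha_updPf (h : msg.a = (m.pf i).a) : F.alpha (m.updPf i msg) = F.alpha m := by
  funext j
  simp only [alpha, m.apply_updPf_pf i (fun p => p.a) h]

lemma alpha0_updPf (h : msg.aG = (m.pf i).aG) : F.alpha0 (m.updPf i msg) = F.alpha0 m := by
  simp only [alpha0, m.apply_updPf_pf i (fun p => p.aG) h]
  rfl

lemma trustSum_updPf (h : msg.ht = (m.pf i).ht) : F.trustSum (m.updPf i msg) = F.trustSum m := by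
  simp only [trustSum, m.apply_updPf_pf i (fun p => p.ht) h]

lemma eta_updPf (ha : msg.aG = (m.pf i).aG) (ht : msg.ht = (m.pf i).ht) :
    F.eta (m.updPf i msg) = F.eta m := by
  funext j
  simp only [eta, F.alpha0_updPf ha, F.trustSum_updPf ht, m.apply_updPf_pf i (fun p => p.ht) ht]

lemma price_updPf_payer (l : Fin N) : F.price (m.updPf i msg) i l = F.price m i l := by
  unfold price
  congr 1
  refine sum_congr rfl fun k hk => ?_
  simp [Profile.updPf, Function.update_of_ne (mem_erase.mp hk).1]

lemma price_updPf_target (l : Fin N) : F.price (m.updPf i msg) l i = F.price m l i := by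
  unfold price
  congr 1
  refine sum_congr rfl fun k hk => ?_
  simp [Profile.updPf, Function.update_of_ne (mem_erase.mp (mem_of_mem_erase hk)).1]

lemma transfer_updPf (ha : msg.a = (m.pf i).a) (haG : msg.aG = (m.pf i).aG)
    (ht : msg.ht = (m.pf i).ht) : F.transfer (m.updPf i msg) i = F.transfer m i := by
  simp only [transfer, F.alpha_updPf ha, F.eta_updPf haG ht, F.price_updPf_payer,
    F.price_updPf_target]
  rfl

end Deviation

variable {F m}

lemma penalty_eq_zero_of_isGNE (hm : F.IsGNE m) (i : Fin N) : F.penalty m i = 0 := by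
  obtain ⟨⟨hval, -, hT⟩, hfeas, -, -, hdevP, -⟩ := hm
  set msg := (m.pf i).withoutPrices
  have ha : msg.a = (m.pf i).a := rfl
  have haG : msg.aG = (m.pf i).aG := rfl
  have ht : msg.ht = (m.pf i).ht := rfl
  have hle := hdevP i msg (hval i).withoutPrices (by rwa [F.trustSum_updPf ht])
    (by rw [F.alpha_updPf ha]; exact (hfeas i).1)
    (by rw [F.alpha_updPf ha, F.eta_updPf haG ht]; exact (hfeas i).2)
  have hdev : F.penalty (m.updPf i msg) i = 0 := F.penalty_updPf_withoutPrices m i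
  simp only [util, F.alpha_updPf ha, tax_eq_transfer_add_penalty, F.transfer_updPf ha haG ht,
    hdev] at hle
  linarith [F.penalty_nonneg m (hval i)]

lemma gov_pG_eq_price0_of_isGNE (hm : F.IsGNE m) : m.gov.pG = F.price0 m := by
  obtain ⟨⟨hval, -, -⟩, -, hα0, hbud, -, hdevG⟩ := hm
  have hvalid : (⟨F.price0 m, m.gov.aG⟩ : GovMsg).Valid :=
    div_nonneg (sum_nonneg fun k _ => (hval k).2.2) N.cast_nonneg
  have hle : F.v0 (F.alpha0 m) - (F.price0 m * F.alpha0 m + (F.price0 m - F.price0 m) ^ 2)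
      ≤ F.v0 (F.alpha0 m) - (F.price0 m * F.alpha0 m + (m.gov.pG - F.price0 m) ^ 2) :=
    hdevG _ hvalid hα0 hbud
  have hsq : (m.gov.pG - F.price0 m) ^ 2 = 0 :=
    le_antisymm (by linarith [sub_self (F.price0 m)]) (sq_nonneg _)
  exact sub_eq_zero.mp (pow_eq_zero_iff two_ne_zero |>.mp hsq)

lemma sum_eta_eq_alpha0 (hT : F.trustSum m ≠ 0)
    (hmin : ∀ i, (F.n i * (m.pf i).ht / F.trustSum m) * F.alpha0 m ≤ 1) :
    ∑ i, F.eta m i = F.alpha0 m := by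
  simp only [eta, min_eq_left (hmin _), ← sum_mul, ← sum_div]
  rw [← trustSum, div_self hT, one_mul]

variable (F m)

/-- Each bilateral payment `π_l^i α_l` is received by `l`, by symmetry of competition. -/
lemma sum_transfer : ∑ i, F.transfer m i = - m.gov.pG * ∑ i, F.eta m i := by
  have hswap : ∑ i, ∑ l ∈ (F.C i).erase i, F.price m i l * F.alpha m l
      = ∑ i, ∑ l ∈ (F.C i).erase i, F.price m l i * F.alpha m i :=
    sum_comm' fun i l => by simp only [mem_univ, true_and, and_true, F.mem_erase_C_comm]
  simp only [transfer, sum_add_distrib, sum_sub_distrib, sum_mul, hswap, ← mul_sum]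
  ring

end Framework

theorem budget_balance_at_GNE_general {N : ℕ} (F : Framework N)
    (m : Profile N) (hm : F.IsGNE m)
    (hmin : ∀ i, (F.n i * (m.pf i).ht / F.trustSum m) * F.alpha0 m ≤ 1) :
    F.tax0 m + ∑ i, F.tax m i = 0 := by
  have hT : F.trustSum m ≠ 0 := hm.1.2.2.ne'
  have htax : ∑ i, F.tax m i = - m.gov.pG * F.alpha0 m := by
    simp only [F.tax_eq_transfer_add_penalty, Framework.penalty_eq_zero_of_isGNE hm, add_zero,
      F.sum_transfer, Framework.sum_eta_eq_alpha0 hT hmin]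
  rw [Framework.tax0, htax, Framework.gov_pG_eq_price0_of_isGNE hm]
  ring

/-- **Budget balance.** At any GNE `m` at which the minimum in the definition
of `η_i` is not binding, the taxes of all players sum to zero. -/
theorem budget_balance_at_GNE {N : ℕ} (F : Framework N) (hreg : F.Regular)
    (m : Profile N) (hm : F.IsGNE m)
    (hmin : ∀ i, (F.n i * (m.pf i).ht / F.trustSum m) * F.alpha0 m ≤ 1) :
    F.tax0 m + ∑ i, F.tax m i = 0 :=
  budget_balance_at_GNE_general F m hm hmin

end MisinfoFilter

end
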